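/- Let (A_n)_{n≥0} and (B_n)_{n≥0} be sequences of nonnegative real numbers with A_0 = B_0 = B_1 = 0 and A_1 = 1, satisfying for all integers n ≥ 1 the harmonic Marty relations (n+1)·A_{n+1} = 2·A_2·A_n + 2·B_2·B_n + (n−1)·A_{n−1} and (n+1)·B_{n+1} = 2·A_2·B_n + 2·B_2·A_n + (n−1)·B_{n−1}. Suppose the power series h(z) = z + Σ_{n≥2} A_n z^n and g(z) = Σ_{n≥2} B_n z^n converge on 𝔻. Then h + g = k_{A_2 + B_2} and h − g = k_{A_2 − B_2} on 𝔻. -/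

import Mathlib

/-! For `s = ±1` the Marty relations decouple: `cₙ = Aₙ + s Bₙ` satisfies
`(n + 2) c_{n+2} = 2 a c_{n+1} + n cₙ` with `a = A₂ + s B₂`, `c₀ = 0`, `c₁ = 1`, which is the
coefficient form of the linear equation `(1 - z²) F' = 2 a F + 1`, `F 0 = 0`, for
`F = Σ cₙ zⁿ`. The Koebe function `k_a` solves the same problem, and the integrating factor
`((1 + z) / (1 - z))^(-a)` times `F - k_a` has zero derivative on the disk, so `F = k_a`. -/

open Complex Set

noncomputable section

/-- The open unit disk in the complex plane. -/
def unitDisk : Set ℂ := {z : ℂ | ‖z‖ < 1}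

/-- The generalized Koebe function `k_a`, using the principal branch of the logarithm
(via the complex power function). -/
def koebeFn (a : ℂ) (z : ℂ) : ℂ :=
  if a = 0 then (1 / 2) * Complex.log ((1 + z) / (1 - z))
  else (1 / (2 * a)) * (((1 + z) / (1 - z)) ^ a - 1)

/-- The lens map `l_R` (with principal-branch powers); note that this formula also
gives `l_0 ≡ 0` and `l_1 = id` on the unit disk. -/
def lensMap (R : ℝ) (z : ℂ) : ℂ :=
  (((1 + z) / (1 - z)) ^ (R : ℂ) - 1) / (((1 + z) / (1 - z)) ^ (R : ℂ) + 1)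

/-- The `n`-th Taylor coefficient of `f` at `0`. -/
def coeffAt (f : ℂ → ℂ) (n : ℕ) : ℂ := iteratedDeriv n f 0 / n.factorial

open scoped ENNReal NNReal

lemma unitDisk_eq_ball : unitDisk = Metric.ball (0 : ℂ) 1 := by
  ext z; simp [unitDisk]

lemma isOpen_unitDisk : IsOpen unitDisk := unitDisk_eq_ball ▸ Metric.isOpen_ball

lemma isPreconnected_unitDisk : IsPreconnected unitDisk :=
  unitDisk_eq_ball ▸ (convex_ball (0 : ℂ) 1).isPreconnected

lemma zero_mem_unitDisk : (0 : ℂ) ∈ unitDisk := by simp [unitDisk]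

section UnitDisk

variable {z : ℂ} (hz : z ∈ unitDisk)
include hz

lemma one_sub_ne_zero_of_mem_unitDisk : 1 - z ≠ 0 := by
  rintro h
  rw [← eq_of_sub_eq_zero h] at hz
  simp [unitDisk] at hz

lemma one_add_ne_zero_of_mem_unitDisk : 1 + z ≠ 0 := by
  rintro h
  rw [eq_neg_of_add_eq_zero_right h] at hz
  simp [unitDisk] at hz

lemma one_sub_sq_ne_zero_of_mem_unitDisk : 1 - z ^ 2 ≠ 0 := by
  rw [show 1 - z ^ 2 = (1 - z) * (1 + z) by ring]
  exact mul_ne_zero (one_sub_ne_zero_of_mem_unitDisk hz) (one_add_ne_zero_of_mem_unitDisk hz)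

lemma re_one_add_div_one_sub_pos : 0 < ((1 + z) / (1 - z)).re := by
  have hz' : normSq z < 1 := by
    rw [normSq_eq_norm_sq]; nlinarith [norm_nonneg z, show ‖z‖ < 1 from hz]
  have hre : ((1 + z) / (1 - z)).re = (1 - normSq z) / normSq (1 - z) := by
    rw [div_re]
    simp only [add_re, sub_re, one_re, add_im, sub_im, one_im, normSq_apply]
    ring
  rw [hre]
  exact div_pos (by linarith) (normSq_pos.mpr (one_sub_ne_zero_of_mem_unitDisk hz))

lemma hasDerivAt_log_one_add_div_one_sub :
    HasDerivAt (fun w => log ((1 + w) / (1 - w))) (2 / (1 - z ^ 2)) z := by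
  have h1 := one_sub_ne_zero_of_mem_unitDisk hz
  have h2 := one_add_ne_zero_of_mem_unitDisk hz
  have hcayley : HasDerivAt (fun w => (1 + w) / (1 - w)) (2 / (1 - z) ^ 2) z := by
    refine (((hasDerivAt_id' z).const_add 1).fun_div ((hasDerivAt_id' z).const_sub 1)
      h1).congr_deriv ?_
    ring
  refine (hcayley.clog (Or.inl (re_one_add_div_one_sub_pos hz))).congr_deriv ?_
  have h := one_sub_sq_ne_zero_of_mem_unitDisk hz
  field_simp
  ring

end UnitDisk

lemma koebeFn_zero (a : ℂ) : koebeFn a 0 = 0 := by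
  by_cases ha : a = 0 <;> simp [koebeFn, ha]

lemma koebeFn_eqOn_exp {a : ℂ} (ha : a ≠ 0) :
    EqOn (koebeFn a) (fun z => (exp (a * log ((1 + z) / (1 - z))) - 1) / (2 * a)) unitDisk := by
  intro z hz
  have hw : (1 + z) / (1 - z) ≠ 0 :=
    div_ne_zero (one_add_ne_zero_of_mem_unitDisk hz) (one_sub_ne_zero_of_mem_unitDisk hz)
  simp only [koebeFn, if_neg ha, cpow_def_of_ne_zero hw]
  field_simp

lemma hasDerivAt_koebeFn (a : ℂ) {z : ℂ} (hz : z ∈ unitDisk) :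
    HasDerivAt (koebeFn a) ((2 * a * koebeFn a z + 1) / (1 - z ^ 2)) z := by
  have hL := hasDerivAt_log_one_add_div_one_sub hz
  have h := one_sub_sq_ne_zero_of_mem_unitDisk hz
  rcases eq_or_ne a 0 with rfl | ha
  · refine ((hL.const_mul (1 / 2 : ℂ)).congr_deriv ?_).congr_of_eventuallyEq ?_
    · field_simp; simp
    · exact Filter.Eventually.of_forall fun w => by simp [koebeFn]
  · have hexp := ((hL.const_mul a).cexp.sub_const 1).div_const (2 * a)
    refine (hexp.congr_deriv ?_).congr_of_eventuallyEq
      ((koebeFn_eqOn_exp ha).eventuallyEq_of_mem (isOpen_unitDisk.mem_nhds hz))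
    rw [koebeFn_eqOn_exp ha hz]
    field_simp
    ring

theorem eqOn_koebeFn_of_hasDerivAt {F : ℂ → ℂ} {a : ℂ}
    (hF : ∀ z ∈ unitDisk, HasDerivAt F ((2 * a * F z + 1) / (1 - z ^ 2)) z) (hF0 : F 0 = 0) :
    EqOn F (koebeFn a) unitDisk := by
  set Φ : ℂ → ℂ := fun w => (F w - koebeFn a w) * exp (-a * log ((1 + w) / (1 - w)))
  have hΦ : ∀ z ∈ unitDisk, HasDerivAt Φ 0 z := by
    intro z hz
    refine (((hF z hz).sub (hasDerivAt_koebeFn a hz)).mul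
      ((hasDerivAt_log_one_add_div_one_sub hz).const_mul (-a)).cexp).congr_deriv ?_
    have h := one_sub_sq_ne_zero_of_mem_unitDisk hz
    simp only [Pi.sub_apply]
    field_simp
    ring
  intro z hz
  have hconst : Φ z = Φ 0 :=
    isOpen_unitDisk.is_const_of_deriv_eq_zero isPreconnected_unitDisk
      (fun w hw => (hΦ w hw).differentiableAt.differentiableWithinAt)
      (fun w hw => (hΦ w hw).deriv) hz zero_mem_unitDisk
  simpa [Φ, hF0, koebeFn_zero, exp_ne_zero, sub_eq_zero] using hconst

lemma summable_norm_mul_pow_of_summable {𝕜 : Type*} [NontriviallyNormedField 𝕜] {c : ℕ → 𝕜}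
    {w : 𝕜} (hw : Summable fun n => c n * w ^ n) {r : ℝ} (hr0 : 0 ≤ r) (hr : r < ‖w‖) :
    Summable fun n => ‖c n‖ * r ^ n := by
  set p := FormalMultilinearSeries.ofScalars 𝕜 c
  have hnorm : ∀ (s : ℝ) (n : ℕ), ‖p n‖ * s ^ n = ‖c n‖ * s ^ n := fun s n => by
    rw [FormalMultilinearSeries.ofScalars_norm]
  have hw_le : (‖w‖₊ : ℝ≥0∞) ≤ p.radius := by
    refine p.le_radius_of_tendsto (l := 0) ?_
    have h := hw.tendsto_atTop_zero.norm
    simp only [norm_mul, norm_pow, norm_zero] at h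
    simpa only [coe_nnnorm, hnorm] using h
  have hr_lt : (r.toNNReal : ℝ≥0∞) < p.radius :=
    (ENNReal.coe_lt_coe.2 ((Real.toNNReal_lt_iff_lt_coe (p := ‖w‖₊) hr0).2 hr)).trans_le hw_le
  simpa only [hnorm, Real.coe_toNNReal _ hr0] using p.summable_norm_mul_pow hr_lt

section PowerSeries

variable {c : ℕ → ℂ} {R : ℝ} (hc : ∀ w ∈ Metric.ball (0 : ℂ) R, Summable fun n => c n * w ^ n)
  {z : ℂ} (hz : z ∈ Metric.ball (0 : ℂ) R)
include hc hz

lemma exists_summable_norm_mul_pow_of_mem_ball :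
    ∃ r, ‖z‖ < r ∧ Summable fun n => ‖c n‖ * r ^ n := by
  rw [mem_ball_zero_iff] at hz
  obtain ⟨r, hzr, hrR⟩ := exists_between hz
  obtain ⟨ρ, hrρ, hρR⟩ := exists_between hrR
  have hρ : ‖(ρ : ℂ)‖ = ρ := by
    rw [norm_real, Real.norm_of_nonneg (by linarith [norm_nonneg z])]
  refine ⟨r, hzr, summable_norm_mul_pow_of_summable (hc ρ ?_) (by linarith [norm_nonneg z]) ?_⟩
  · rwa [mem_ball_zero_iff, hρ]
  · rwa [hρ]

lemma differentiableAt_tsum_mul_pow :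
    DifferentiableAt ℂ (fun w => ∑' n, c n * w ^ n) z := by
  obtain ⟨r, hzr, hsum⟩ := exists_summable_norm_mul_pow_of_mem_ball hc hz
  refine (differentiableOn_tsum_of_summable_norm (F := fun n w => c n * w ^ n) hsum
    (fun n => (differentiableOn_pow n).const_mul (c n)) Metric.isOpen_ball
    (fun n w hw => ?_)).differentiableAt (Metric.isOpen_ball.mem_nhds (mem_ball_zero_iff.2 hzr))
  rw [norm_mul, norm_pow]
  gcongr
  exact (mem_ball_zero_iff.1 hw).le

lemma hasSum_deriv_tsum_mul_pow :
    HasSum (fun n => c n * (n * z ^ (n - 1))) (deriv (fun w => ∑' n, c n * w ^ n) z) := by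
  obtain ⟨r, hzr, hsum⟩ := exists_summable_norm_mul_pow_of_mem_ball hc hz
  have h := hasSum_deriv_of_summable_norm (F := fun n w => c n * w ^ n) hsum
    (fun n => (differentiableOn_pow n).const_mul (c n)) Metric.isOpen_ball
    (fun n w hw => ?_) (mem_ball_zero_iff.2 hzr)
  · simpa using h
  · rw [norm_mul, norm_pow]
    gcongr
    exact (mem_ball_zero_iff.1 hw).le

end PowerSeries

section Recurrence

variable {c : ℕ → ℂ} {a : ℂ} (hc0 : c 0 = 0) (hc1 : c 1 = 1)
  (hrec : ∀ n : ℕ, ((n : ℂ) + 2) * c (n + 2) = 2 * a * c (n + 1) + n * c n)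
include hc0 hc1 hrec

/-- Termwise, the recurrence says `D - 1 = 2 a F + z² D` for `F = Σ cₙ zⁿ` and `D = F'`. -/
lemma one_sub_sq_mul_eq_of_hasSum {z F D : ℂ} (hF : HasSum (fun n => c n * z ^ n) F)
    (hD : HasSum (fun n => c n * (n * z ^ (n - 1))) D) :
    (1 - z ^ 2) * D = 2 * a * F + 1 := by
  have hD2 : HasSum (fun n => c (n + 2) * ((n + 2 : ℕ) * z ^ (n + 1))) (D - 1) := by
    simpa [Finset.sum_range_succ, hc0, hc1] using (hasSum_nat_add_iff' 2).2 hD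
  have hF1 : HasSum (fun n => c (n + 1) * z ^ (n + 1)) F := by
    simpa [hc0] using (hasSum_nat_add_iff' 1).2 hF
  have hRHS := (hF1.mul_left (2 * a)).add (hD.mul_left (z ^ 2))
  have hterm : ∀ n : ℕ, c (n + 2) * ((n + 2 : ℕ) * z ^ (n + 1))
      = 2 * a * (c (n + 1) * z ^ (n + 1)) + z ^ 2 * (c n * (n * z ^ (n - 1))) := by
    rintro (_ | n)
    · have h := hrec 0
      push_cast at h ⊢
      linear_combination z * h
    · have h := hrec (n + 1)
      push_cast [Nat.add_sub_cancel] at h ⊢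
      linear_combination z ^ (n + 2) * h
  linear_combination hD2.unique ((funext hterm) ▸ hRHS)

theorem eqOn_koebeFn_of_recurrence
    (hconv : ∀ z ∈ unitDisk, Summable fun n => c n * z ^ n) :
    EqOn (fun z => ∑' n, c n * z ^ n) (koebeFn a) unitDisk := by
  rw [unitDisk_eq_ball] at hconv
  have hF0 : ∑' n, c n * (0 : ℂ) ^ n = 0 :=
    (tsum_eq_single 0 fun n hn => by simp [hn]).trans (by simp [hc0])
  refine eqOn_koebeFn_of_hasDerivAt (fun z hz => ?_) hF0
  have hz' : z ∈ Metric.ball (0 : ℂ) 1 := unitDisk_eq_ball ▸ hz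
  have hode := one_sub_sq_mul_eq_of_hasSum hc0 hc1 hrec (hconv z hz').hasSum
    (hasSum_deriv_tsum_mul_pow hconv hz')
  rw [← hode, mul_div_cancel_left₀ _ (one_sub_sq_ne_zero_of_mem_unitDisk hz)]
  exact (differentiableAt_tsum_mul_pow hconv hz').hasDerivAt

end Recurrence

section Marty

variable {A B : ℕ → ℝ}
  (hMartyA : ∀ n : ℕ, 1 ≤ n →
    ((n : ℝ) + 1) * A (n + 1) = 2 * A 2 * A n + 2 * B 2 * B n + ((n : ℝ) - 1) * A (n - 1))
  (hMartyB : ∀ n : ℕ, 1 ≤ n →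
    ((n : ℝ) + 1) * B (n + 1) = 2 * A 2 * B n + 2 * B 2 * A n + ((n : ℝ) - 1) * B (n - 1))
  {s : ℝ} (hs : s ^ 2 = 1)
include hMartyA hMartyB hs

lemma marty_recurrence_add_mul (n : ℕ) :
    ((n : ℂ) + 2) * ((A (n + 2) + s * B (n + 2) : ℝ) : ℂ)
      = 2 * ((A 2 + s * B 2 : ℝ) : ℂ) * ((A (n + 1) + s * B (n + 1) : ℝ) : ℂ)
        + n * ((A n + s * B n : ℝ) : ℂ) := by
  have hA := hMartyA (n + 1) le_add_self
  have hB := hMartyB (n + 1) le_add_self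
  push_cast [Nat.add_sub_cancel] at hA hB
  have h : ((n : ℝ) + 2) * (A (n + 2) + s * B (n + 2))
      = 2 * (A 2 + s * B 2) * (A (n + 1) + s * B (n + 1)) + n * (A n + s * B n) := by
    linear_combination hA + s * hB - 2 * B 2 * B (n + 1) * hs
  exact_mod_cast h

theorem tsum_add_mul_tsum_eqOn_koebeFn (hA0 : A 0 = 0) (hB0 : B 0 = 0) (hA1 : A 1 = 1)
    (hB1 : B 1 = 0) (hconvA : ∀ z ∈ unitDisk, Summable fun n : ℕ => (A n : ℂ) * z ^ n)
    (hconvB : ∀ z ∈ unitDisk, Summable fun n : ℕ => (B n : ℂ) * z ^ n) :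
    EqOn (fun z => (∑' n, (A n : ℂ) * z ^ n) + s * ∑' n, (B n : ℂ) * z ^ n)
      (koebeFn ((A 2 + s * B 2 : ℝ) : ℂ)) unitDisk := by
  have hconv : ∀ z ∈ unitDisk, HasSum (fun n => ((A n + s * B n : ℝ) : ℂ) * z ^ n)
      ((∑' n, (A n : ℂ) * z ^ n) + s * ∑' n, (B n : ℂ) * z ^ n) := fun z hz => by
    convert (hconvA z hz).hasSum.add ((hconvB z hz).hasSum.mul_left (s : ℂ)) using 1
    ext n; push_cast; ring
  intro z hz
  exact (hconv z hz).tsum_eq.symm.trans <|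
    eqOn_koebeFn_of_recurrence (by simp [hA0, hB0]) (by simp [hA1, hB1])
      (marty_recurrence_add_mul hMartyA hMartyB hs) (fun w hw => (hconv w hw).summable) hz

end Marty

theorem harmonic_marty_relations_give_koebe_general
    (A B : ℕ → ℝ)
    (hA0 : A 0 = 0) (hB0 : B 0 = 0) (hB1 : B 1 = 0) (hA1 : A 1 = 1)
    (hMartyA : ∀ n : ℕ, 1 ≤ n →
      ((n : ℝ) + 1) * A (n + 1)
        = 2 * A 2 * A n + 2 * B 2 * B n + ((n : ℝ) - 1) * A (n - 1))
    (hMartyB : ∀ n : ℕ, 1 ≤ n →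
      ((n : ℝ) + 1) * B (n + 1)
        = 2 * A 2 * B n + 2 * B 2 * A n + ((n : ℝ) - 1) * B (n - 1))
    (hconvA : ∀ z ∈ unitDisk, Summable fun n : ℕ => (A n : ℂ) * z ^ n)
    (hconvB : ∀ z ∈ unitDisk, Summable fun n : ℕ => (B n : ℂ) * z ^ n) :
    ∀ z ∈ unitDisk,
      (∑' n : ℕ, (A n : ℂ) * z ^ n) + (∑' n : ℕ, (B n : ℂ) * z ^ n)
        = koebeFn ((A 2 + B 2 : ℝ) : ℂ) z ∧
      (∑' n : ℕ, (A n : ℂ) * z ^ n) - (∑' n : ℕ, (B n : ℂ) * z ^ n)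
        = koebeFn ((A 2 - B 2 : ℝ) : ℂ) z := by
  intro z hz
  have key (s : ℝ) (hs : s ^ 2 = 1) := tsum_add_mul_tsum_eqOn_koebeFn hMartyA hMartyB hs
    hA0 hB0 hA1 hB1 hconvA hconvB hz
  constructor
  · simpa using key 1 (one_pow 2)
  · simpa [sub_eq_add_neg] using key (-1) (by norm_num)

/-- If nonnegative real coefficients `A_n`, `B_n` with `A_0 = B_0 = B_1 = 0`, `A_1 = 1`
satisfy the harmonic Marty relations for all `n ≥ 1` and the power series
`h(z) = Σ A_n zⁿ`, `g(z) = Σ B_n zⁿ` converge on the unit disk, then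
`h + g = k_{A_2+B_2}` and `h - g = k_{A_2-B_2}` on the disk. -/
theorem harmonic_marty_relations_give_koebe
    (A B : ℕ → ℝ) (hApos : ∀ n, 0 ≤ A n) (hBpos : ∀ n, 0 ≤ B n)
    (hA0 : A 0 = 0) (hB0 : B 0 = 0) (hB1 : B 1 = 0) (hA1 : A 1 = 1)
    (hMartyA : ∀ n : ℕ, 1 ≤ n →
      ((n : ℝ) + 1) * A (n + 1)
        = 2 * A 2 * A n + 2 * B 2 * B n + ((n : ℝ) - 1) * A (n - 1))
    (hMartyB : ∀ n : ℕ, 1 ≤ n →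
      ((n : ℝ) + 1) * B (n + 1)
        = 2 * A 2 * B n + 2 * B 2 * A n + ((n : ℝ) - 1) * B (n - 1))
    (hconvA : ∀ z ∈ unitDisk, Summable fun n : ℕ => (A n : ℂ) * z ^ n)
    (hconvB : ∀ z ∈ unitDisk, Summable fun n : ℕ => (B n : ℂ) * z ^ n) :
    ∀ z ∈ unitDisk,
      (∑' n : ℕ, (A n : ℂ) * z ^ n) + (∑' n : ℕ, (B n : ℂ) * z ^ n)
        = koebeFn ((A 2 + B 2 : ℝ) : ℂ) z ∧
      (∑' n : ℕ, (A n : ℂ) * z ^ n) - (∑' n : ℕ, (B n : ℂ) * z ^ n)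
        = koebeFn ((A 2 - B 2 : ℝ) : ℂ) z :=
  harmonic_marty_relations_give_koebe_general A B hA0 hB0 hB1 hA1 hMartyA hMartyB hconvA hconvB
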